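/- Let M be a multiline queue and 1 ≤ i ≤ n−1 with e_i^←(M) ≠ M. Let (r,i+1) be the site of the ball moved by e_i^←, set ℓ = L_M(r,i+1), and suppose the i-active region act_i(M) spans rows p through r. Then L_M(s,i+1) = ℓ for all p ≤ s ≤ r. -/

import Mathlib

open scoped BigOperators

namespace MultilineQueue

/-! ### Basic combinatorial utilities -/

/-- The list of columns `1, …, n`. -/
def colsList (n : ℕ) : List ℕ := (List.range n).map (· + 1)

/-- Insert `x` into a weakly decreasing list, keeping it weakly decreasing. -/
def insDesc (x : ℕ) : List ℕ → List ℕ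
  | [] => [x]
  | y :: ys => if y ≤ x then x :: y :: ys else y :: insDesc x ys

/-- Sort a list of naturals in weakly decreasing order. -/
def sortDesc : List ℕ → List ℕ
  | [] => []
  | x :: xs => insDesc x (sortDesc xs)

/-- The positive parts of a weak composition `α` (supported on columns `1,…,n`). -/
def compParts (n : ℕ) (α : ℕ → ℕ) : List ℕ :=
  ((colsList n).map α).filter (fun x => 0 < x)

/-- `sort(α)`: the partition obtained by sorting the positive parts of `α` decreasingly. -/
def sortComp (n : ℕ) (α : ℕ → ℕ) : List ℕ := sortDesc (compParts n α)

/-- The conjugate partition: `(conj l).get j = #{i : l i ≥ j+1}`, for `j = 0,…,l₁-1`. -/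
def conj (l : List ℕ) : List ℕ :=
  (List.range (l.headD 0)).map (fun j => (l.filter (fun x => j < x)).length)

/-- A list is a partition: weakly decreasing with positive parts. -/
def IsPartitionL (l : List ℕ) : Prop := l.Pairwise (· ≥ ·) ∧ ∀ x ∈ l, 0 < x

/-- Dominance order on partitions: `mu ⊴ lam` (same size, partial sums dominated). -/
def Dominates (lam mu : List ℕ) : Prop :=
  mu.sum = lam.sum ∧ ∀ k, (mu.take k).sum ≤ (lam.take k).sum

/-- A weak composition with `n` parts: a function `ℕ → ℕ` supported on `{1,…,n}`. -/
def IsWeakComp (n : ℕ) (α : ℕ → ℕ) : Prop := ∀ j, (j = 0 ∨ n < j) → α j = 0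

/-- The simple transposition `s_i` acting on a weak composition, exchanging
the entries at positions `i` and `i+1`. -/
def swapComp (i : ℕ) (α : ℕ → ℕ) : ℕ → ℕ :=
  fun j => if j = i then α (i + 1) else if j = i + 1 then α i else α j

/-- A strong composition `τ` (a list), regarded as a weak composition with `n`
parts by appending zeros. -/
def padComp (n : ℕ) (τ : List ℕ) : ℕ → ℕ :=
  fun j => if 1 ≤ j ∧ j ≤ n then τ.getD (j - 1) 0 else 0

/-! ### Bracket matching between two rows -/

/-- Classical bracket matching between a bottom row `a` (closing letters) and a top
row `b` (opening letters), reading columns `1,…,n` left to right, and within each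
column the top letter before the bottom letter.  Returns the tuple
`(stack of unmatched opening positions (head = most recent),
  matched positions of `b`, matched positions of `a`,
  unmatched positions of `a` in left-to-right order)`. -/
def scan (n : ℕ) (a b : Finset ℕ) : List ℕ × Finset ℕ × Finset ℕ × List ℕ :=
  (colsList n).foldl
    (fun st j =>
      let stk : List ℕ := if j ∈ b then j :: st.1 else st.1
      if j ∈ a then
        match stk with
        | [] => ([], st.2.1, st.2.2.1, st.2.2.2 ++ [j])
        | x :: rest => (rest, insert x st.2.1, insert j st.2.2.1, st.2.2.2)
      else (stk, st.2.1, st.2.2.1, st.2.2.2))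
    ([], ∅, ∅, [])

/-- `θ(a⊗b)`: the set of elements of the bottom row `a` classically matched when the
top row `b` is bracketed against it. -/
def theta (n : ℕ) (a b : Finset ℕ) : Finset ℕ := (scan n a b).2.2.1

/-- The set of elements of the top row `b` that are classically matched. -/
def matchedTop (n : ℕ) (a b : Finset ℕ) : Finset ℕ := (scan n a b).2.1

/-- `R(a,b)`: cylindrical bracket matching; the unmatched opening parentheses wrap
around and match the leftmost unmatched closing parentheses. -/
def Rcyl (n : ℕ) (a b : Finset ℕ) : Finset ℕ :=
  (scan n a b).2.2.1 ∪ ((scan n a b).2.2.2.take (scan n a b).1.length).toFinset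

/-- `θ(b₁⊗…⊗b_L)`, extended recursively:
`θ(b₁⊗…⊗b_L) = θ(b₁ ⊗ θ(b₂⊗…⊗b_L))`. -/
def thetaTup (n : ℕ) : List (Finset ℕ) → Finset ℕ
  | [] => ∅
  | [b] => b
  | b :: c :: rest => theta n b (thetaTup n (c :: rest))

/-- `R(b₁,…,b_L)`, extended recursively: `R(b₁,…,b_L) = R(b₁, R(b₂,…,b_L))`. -/
def Rtup (n : ℕ) : List (Finset ℕ) → Finset ℕ
  | [] => ∅
  | [b] => b
  | b :: c :: rest => Rcyl n b (Rtup n (c :: rest))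

/-! ### Multiline queues, the FM labelling, type and major index

A multiline queue (or generalized multiline queue) is recorded as a list of
rows, bottom row first; each row is the set of columns containing a ball. -/

/-- The FM label of the ball of the bottom row of `rows` in column `c`
(`0` if there is no ball there): by the corner transfer matrix description of the
Ferrari–Martin algorithm, the bottom-row balls of label `≥ k` are exactly
`R(B₁,…,B_k)`, so the label is the largest such `k`. -/
def botLabel (n : ℕ) (rows : List (Finset ℕ)) (c : ℕ) : ℕ :=
  (Finset.range (rows.length + 1)).sup
    (fun k => if c ∈ Rtup n (rows.take k) then k else 0)

/-- `type(M)`: the weak composition of FM labels on the bottom row. -/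
def typeOf (n : ℕ) (rows : List (Finset ℕ)) : ℕ → ℕ := botLabel n rows

/-- `L_M(r,c)`: the FM label of the ball at row `r` (1-indexed from the bottom),
column `c`; `0` if the site is empty. The labels of row `r` only depend on
rows `r, r+1, …`, for which `c` sits on the bottom row; a strand of length `h`
through row `r` truncates to a strand of length `h − (r−1)` there. -/
def labelAt (n : ℕ) (rows : List (Finset ℕ)) (r c : ℕ) : ℕ :=
  if 1 ≤ r ∧ 0 < botLabel n (rows.drop (r - 1)) c then
    botLabel n (rows.drop (r - 1)) c + (r - 1)
  else 0

/-- `strtype(M)`: the strong type, i.e. the type with its zero entries deleted. -/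
def strtypeOf (n : ℕ) (rows : List (Finset ℕ)) : List ℕ :=
  ((colsList n).map (typeOf n rows)).filter (fun x => x ≠ 0)

/-- `I_k(M)`: the set of columns whose bottom-row label is exactly `k`. -/
def Iset (n : ℕ) (rows : List (Finset ℕ)) (k : ℕ) : Finset ℕ :=
  (Finset.Icc 1 n).filter (fun c => typeOf n rows c = k)

/-- The set of balls of row `r` (1-indexed) of `M` having label `≥ ℓ`. -/
def Sset (n : ℕ) (rows : List (Finset ℕ)) (r ℓ : ℕ) : Finset ℕ :=
  if ℓ ≤ rows.length then Rtup n ((rows.drop (r - 1)).take (ℓ + 1 - r)) else ∅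

/-- The number of balls of row `r` with label `≥ ℓ` whose FM pairing into row
`r−1` wraps around the cylinder: these are precisely the ones that cannot be
matched classically. -/
def wrapCount (n : ℕ) (rows : List (Finset ℕ)) (r ℓ : ℕ) : ℕ :=
  (Sset n rows r ℓ).card - (theta n (rows.getD (r - 2) ∅) (Sset n rows r ℓ)).card

/-- `m_{ℓ,r}`: the number of balls labelled exactly `ℓ` in row `r` whose FM pairing
into row `r−1` wraps. -/
def mWrap (n : ℕ) (rows : List (Finset ℕ)) (ℓ r : ℕ) : ℕ :=
  wrapCount n rows r ℓ - wrapCount n rows r (ℓ + 1)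

/-- The major index `maj(M) = Σ_{2≤ℓ≤L} Σ_{2≤r≤ℓ} m_{ℓ,r}·(ℓ−r+1)`. -/
def maj (n : ℕ) (rows : List (Finset ℕ)) : ℕ :=
  ∑ ℓ ∈ Finset.Icc 2 rows.length, ∑ r ∈ Finset.Icc 2 ℓ, mWrap n rows ℓ r * (ℓ - r + 1)

/-- `M` is a multiline queue of shape `(lam, n)`: it has `lam₁` rows, all contained
in `{1,…,n}`, and row `j` has `lam'_j` balls. -/
def IsMLQ (n : ℕ) (lam : List ℕ) (rows : List (Finset ℕ)) : Prop :=
  rows.length = lam.headD 0 ∧ (∀ B ∈ rows, B ⊆ Finset.Icc 1 n) ∧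
    ∀ j, j < rows.length → (rows.getD j ∅).card = (lam.filter (fun x => j < x)).length

/-- The unique straight (nonwrapping, vertical-strand) multiline queue of type `α`:
its `j`-th row is `{c : α c ≥ j}`. -/
def straight (n : ℕ) (α : ℕ → ℕ) : List (Finset ℕ) :=
  (List.range ((sortComp n α).headD 0)).map
    (fun j => (Finset.Icc 1 n).filter (fun c => j + 1 ≤ α c))

/-! ### Row dropping operators and the collapsing map -/

/-- The saturated row dropping operator `e_i^{↓*}` (for `1 ≤ i < rows.length`):
the pair of rows `(B_i, B_{i+1})` is replaced by `(B_i ∪ u, m)`, where `m` and `u`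
are the matched, resp. unmatched, elements of `B_{i+1}` against `B_i`. -/
def eStar (n : ℕ) (i : ℕ) (rows : List (Finset ℕ)) : List (Finset ℕ) :=
  if 1 ≤ i ∧ i < rows.length then
    let a := rows.getD (i - 1) ∅
    let b := rows.getD i ∅
    let m := matchedTop n a b
    (rows.set (i - 1) (a ∪ (b \ m))).set i m
  else rows

/-- `e^{↓*}_{[b,1]} = e^{↓*}_1 ∘ e^{↓*}_2 ∘ ⋯ ∘ e^{↓*}_b` (applying `e^{↓*}_b` first). -/
def eStarSeq (n b : ℕ) (rows : List (Finset ℕ)) : List (Finset ℕ) :=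
  (List.range b).foldl (fun r k => eStar n (b - k) r) rows

/-- The collapsing operator
`ρ_N = e^{↓*}_{[L−1,1]} ∘ ⋯ ∘ e^{↓*}_{[2,1]} ∘ e^{↓*}_{[1,1]}`; the resulting
empty rows at the top are discarded, so that the result is an honest nonwrapping
multiline queue of its own (smaller) shape. -/
def rhoN (n : ℕ) (rows : List (Finset ℕ)) : List (Finset ℕ) :=
  ((List.range (rows.length - 1)).foldl (fun r i => eStarSeq n (i + 1) r) rows).filter
    (fun B => B ≠ ∅)

/-- `π^{(k)}(M)`: the bottom `k` rows of `M`. -/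
def trunc (rows : List (Finset ℕ)) (k : ℕ) : List (Finset ℕ) := rows.take k

/-- `ρ^{(k)}(M) = ρ_N(π^{(k)}(M))`. -/
def rhoTrunc (n : ℕ) (rows : List (Finset ℕ)) (k : ℕ) : List (Finset ℕ) :=
  rhoN n (trunc rows k)

/-- The intermediate stages `M₁ = M, M₂ = e^{↓*}_{[1,1]}(M₁), …, M_L` of the
collapsing procedure. -/
def stages (n : ℕ) (rows : List (Finset ℕ)) : List (List (Finset ℕ)) :=
  (List.range (rows.length - 1)).scanl (fun r i => eStarSeq n (i + 1) r) rows

/-- The recording tableau `ρ_Q(M)`, as a list of rows (bottom row first):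
row `j+1` receives `|row_{j+1}(M_{j+1})|` boxes with entry `j+1`, and then, at each
later stage `s+1`, `|row_{j+1}(M_{s+1})| − |row_{j+1}(M_s)|` boxes with entry `s+1`. -/
def rhoQ (n : ℕ) (rows : List (Finset ℕ)) : List (List ℕ) :=
  let st := stages n rows
  let L := rows.length
  let size : ℕ → ℕ → ℕ := fun j s => ((st.getD s []).getD j ∅).card
  ((List.range L).map (fun j =>
    List.replicate (size j j) (j + 1) ++
      (((List.range L).filter (fun s => j < s)).map
        (fun s => List.replicate (size j s - size j (s - 1)) (s + 1))).flatten)).filter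
    (fun row => row ≠ [])

/-! ### Column crystal operators -/

/-- Bracket the letters `i` (closing) against `i+1` (opening) in the row word of
`M` (rows top to bottom, right to left within each row).  Returns
`(stack of list-indices of rows with unmatched balls in column i+1 (head = most recent),
  list-indices of rows with unmatched balls in column i, in word order)`. -/
def colScan (n : ℕ) (i : ℕ) (rows : List (Finset ℕ)) : List ℕ × List ℕ :=
  ((List.range rows.length).reverse).foldl
    (fun st r =>
      let stk : List ℕ := if i + 1 ∈ rows.getD r ∅ then r :: st.1 else st.1
      if i ∈ rows.getD r ∅ then
        match stk with
        | [] => ([], st.2 ++ [r])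
        | _ :: rest => (rest, st.2)
      else (stk, st.2))
    ([], [])

/-- The column raising operator `e_i^←`: moves the ball corresponding to the
leftmost unmatched `i+1` of `θ_i(rw(M))` from column `i+1` to column `i`
(identity if there is none). -/
def eCol (n : ℕ) (i : ℕ) (rows : List (Finset ℕ)) : List (Finset ℕ) :=
  match (colScan n i rows).1.getLast? with
  | none => rows
  | some r => rows.set r (insert i ((rows.getD r ∅).erase (i + 1)))

/-- The column lowering operator `f_i^→`: moves the ball corresponding to the
rightmost unmatched `i` of `θ_i(rw(M))` from column `i` to column `i+1`
(identity if there is none). -/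
def fCol (n : ℕ) (i : ℕ) (rows : List (Finset ℕ)) : List (Finset ℕ) :=
  match (colScan n i rows).2.getLast? with
  | none => rows
  | some r => rows.set r (insert (i + 1) ((rows.getD r ∅).erase i))

/-- The 1-indexed row of the ball moved by `e_i^←`, if any. -/
def movedRowE (n : ℕ) (i : ℕ) (rows : List (Finset ℕ)) : Option ℕ :=
  ((colScan n i rows).1.getLast?).map (· + 1)

/-- `M` is `e_i^←`-full: `type(M)_i < type(M)_{i+1}` and `θ_i(rw(M))` contains
exactly one unmatched `i+1`. -/
def isEFull (n : ℕ) (i : ℕ) (rows : List (Finset ℕ)) : Prop :=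
  typeOf n rows i < typeOf n rows (i + 1) ∧ (colScan n i rows).1.length = 1

/-- `M` is `f_i^→`-full: `f_i^→(M)` is `e_i^←`-full. -/
def isFFull (n : ℕ) (i : ℕ) (rows : List (Finset ℕ)) : Prop :=
  isEFull n i (fCol n i rows)

/-- The bottom row `p` of the `i`-active region `act_i(M)`, given the row `r` of the
moved ball and its label `ℓ`: the maximal `p ≤ r` with `L_M(p−1,i) = 0` or
`L_M(p−1,i) ≥ ℓ` (noting `L_M(0,i) = 0`, so `p = 1` always qualifies). -/
def actLow (n : ℕ) (rows : List (Finset ℕ)) (i r ℓ : ℕ) : ℕ :=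
  ((Finset.Icc 1 r).filter
    (fun p => labelAt n rows (p - 1) i = 0 ∨ ℓ ≤ labelAt n rows (p - 1) i)).sup id

/-! ### FM pairings and strands -/

/-- The first element of `s` weakly to the right of `c`, cyclically. -/
def cycNext (s : Finset ℕ) (c : ℕ) : Option ℕ :=
  if h : (s.filter (fun x => c ≤ x)).Nonempty then some ((s.filter (fun x => c ≤ x)).min' h)
  else if h2 : s.Nonempty then some (s.min' h2) else none

/-- Stable insertion into a list sorted weakly decreasingly by `key`. -/
def insKey (key : ℕ → ℕ) (x : ℕ) : List ℕ → List ℕ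
  | [] => [x]
  | y :: ys => if key y ≤ key x then x :: y :: ys else y :: insKey key x ys

/-- Stable sort, weakly decreasing by `key`. -/
def sortKeyDesc (key : ℕ → ℕ) : List ℕ → List ℕ
  | [] => []
  | x :: xs => insKey key x (sortKeyDesc key xs)

/-- The FM pairings from row `r+1` to row `r` (1-indexed `r ≥ 1`): the balls of row
`r+1` are processed in decreasing order of label (left to right among equal labels),
each pairing to the first unpaired ball of row `r` weakly to its right, cyclically.
Returns the list of pairs `(source column in row r+1, target column in row r)`. -/
def pairsAt (n : ℕ) (rows : List (Finset ℕ)) (r : ℕ) : List (ℕ × ℕ) :=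
  let top := rows.getD r ∅
  let bot := rows.getD (r - 1) ∅
  let order := sortKeyDesc (fun c => labelAt n rows (r + 1) c)
    ((colsList n).filter (fun c => decide (c ∈ top)))
  (order.foldl (fun (st : Finset ℕ × List (ℕ × ℕ)) c =>
      match cycNext st.1 c with
      | some t => (st.1.erase t, st.2 ++ [(c, t)])
      | none => st) (bot, [])).2

/-- The column of the ball of row `r` to which the ball of row `r+1` in column `c`
is paired by the FM algorithm. -/
def pairedTo (n : ℕ) (rows : List (Finset ℕ)) (r c : ℕ) : Option ℕ :=
  ((pairsAt n rows r).find? (fun p => decide (p.1 = c))).map (·.2)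

/-- A strand of `M`: a nonempty sequence of columns `s = [c₁, …, c_h]` with the ball
`c_t` in row `t`, the ball `c_{t+1}` paired to `c_t` for each `t`, and the top ball
`c_h` not paired to from row `h+1`. -/
def IsStrand (n : ℕ) (rows : List (Finset ℕ)) (s : List ℕ) : Prop :=
  s ≠ [] ∧
  (∀ t, t < s.length → s.getD t 0 ∈ rows.getD t ∅) ∧
  (∀ t, t + 1 < s.length → pairedTo n rows (t + 1) (s.getD (t + 1) 0) = some (s.getD t 0)) ∧
  (∀ c, pairedTo n rows s.length c ≠ some (s.getD (s.length - 1) 0))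

/-! ### Semistandard Young tableaux and the charge statistic -/

/-- `Q` is a semistandard Young tableau of shape `sh` and content `ct`, recorded as a
list of rows (bottom row first, French convention), each row a list of entries:
rows weakly increase, columns strictly increase from bottom to top, and for every
`m ≥ 1` the entry `m` occurs `ct_{m}` times. -/
def IsSSYT (Q : List (List ℕ)) (sh ct : List ℕ) : Prop :=
  Q.map List.length = sh ∧
  (∀ row ∈ Q, row.Pairwise (· ≤ ·)) ∧
  (∀ row ∈ Q, ∀ x ∈ row, 0 < x) ∧
  (∀ j k, j + 1 < Q.length → k < (Q.getD (j + 1) []).length →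
      (Q.getD j []).getD k 0 < (Q.getD (j + 1) []).getD k 0) ∧
  (∀ m, 0 < m → ((Q.flatten).filter (fun x => x = m)).length = ct.getD (m - 1) 0)

/-- Find the rightmost occurrence of the value `v` at a position `≤ pos` in the
indexed word `l`; if none, wrap around (cyclically) and take the rightmost
occurrence of `v` overall.  Returns the position together with a flag recording
whether the search wrapped. -/
def chargeFind (l : List (ℕ × ℕ)) (v pos : ℕ) : Option (ℕ × Bool) :=
  match (l.filter (fun p => decide (p.2 = v ∧ p.1 ≤ pos))).getLast? with
  | some p => some (p.1, false)
  | none =>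
    match (l.filter (fun p => decide (p.2 = v))).getLast? with
    | some p => some (p.1, true)
    | none => none

/-- Extract (the rest of) one standard subword, consisting of the letters
`v, v+1, v+2, …`, scanning right to left cyclically from position `pos`; `idx` is
the charge index of the previously extracted letter, incremented whenever the next
letter is found to its right (i.e. when the leftward search wraps around), kept
otherwise.  Returns the total charge contribution of the extracted letters
together with the remaining word. -/
def extractCharge : ℕ → List (ℕ × ℕ) → ℕ → ℕ → ℕ → ℕ × List (ℕ × ℕ)
  | 0, l, _, _, _ => (0, l)
  | fuel + 1, l, v, pos, idx =>
    match chargeFind l v pos with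
    | none => (0, l)
    | some pw =>
      let idx' := if pw.2 then idx + 1 else idx
      let r := extractCharge fuel (l.filter (fun q => decide (q.1 ≠ pw.1))) (v + 1)
        (pw.1 - 1) idx'
      (idx' + r.1, r.2)

/-- The Lascoux–Schützenberger charge of an indexed word: repeatedly extract a
standard subword (starting from the rightmost `1`, whose index is `0`) and add up
the charge contributions. -/
def chargeWordAux : ℕ → List (ℕ × ℕ) → ℕ
  | 0, _ => 0
  | fuel + 1, l =>
    match chargeFind l 1 l.length with
    | none => 0
    | some pw =>
      let r := extractCharge l.length (l.filter (fun q => decide (q.1 ≠ pw.1))) 2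
        (pw.1 - 1) 0
      r.1 + chargeWordAux fuel r.2

/-- The charge of a word. -/
def chargeWord (w : List ℕ) : ℕ := chargeWordAux w.length (w.zipIdx.map Prod.swap)

/-- The charge of a tableau: the charge of its reading word (rows read top to
bottom, left to right within each row). -/
def tabCharge (Q : List (List ℕ)) : ℕ := chargeWord Q.reverse.flatten

/-! ### Polynomials -/

/-- The content monomial `x^M = Π_j Π_{c ∈ B_j} x_c`, with coefficients in `ℤ[q]`. -/
noncomputable def xM (n : ℕ) (rows : List (Finset ℕ)) :
    MvPolynomial ℕ (Polynomial ℤ) :=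
  (rows.map (fun B => ∏ c ∈ B, (MvPolynomial.X c : MvPolynomial ℕ (Polynomial ℤ)))).prod

/-- `q^k` as a coefficient. -/
noncomputable def qpow (k : ℕ) : Polynomial ℤ := Polynomial.X ^ k

/-- The `t = 0` ASEP polynomial `f_α(X;q,0) = Σ_{M ∈ MLQ(α)} q^{maj(M)} x^M`. -/
noncomputable def fASEP (n : ℕ) (α : ℕ → ℕ) : MvPolynomial ℕ (Polynomial ℤ) :=
  ∑ᶠ (rows : List (Finset ℕ))
    (_ : IsMLQ n (sortComp n α) rows ∧ typeOf n rows = α),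
    MvPolynomial.C (qpow (maj n rows)) * xM n rows

/-- The Demazure atom `𝒜_β(X) = Σ_{M ∈ NMLQ(β)} x^M`. -/
noncomputable def atom (n : ℕ) (β : ℕ → ℕ) : MvPolynomial ℕ (Polynomial ℤ) :=
  ∑ᶠ (rows : List (Finset ℕ))
    (_ : IsMLQ n (sortComp n β) rows ∧ maj n rows = 0 ∧ typeOf n rows = β),
    xM n rows

/-- The `t = 0` quasisymmetric Macdonald polynomial
`G_γ(X;q,0) = Σ_{M ∈ SMLQ(γ)} q^{maj(M)} x^M`. -/
noncomputable def Gqsym (n : ℕ) (γ : List ℕ) : MvPolynomial ℕ (Polynomial ℤ) :=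
  ∑ᶠ (rows : List (Finset ℕ))
    (_ : IsMLQ n (sortDesc γ) rows ∧ strtypeOf n rows = γ),
    MvPolynomial.C (qpow (maj n rows)) * xM n rows

/-- The quasisymmetric Schur polynomial `QS_τ(X) = Σ_{M ∈ SNMLQ(τ)} x^M`. -/
noncomputable def QSpoly (n : ℕ) (τ : List ℕ) : MvPolynomial ℕ (Polynomial ℤ) :=
  ∑ᶠ (rows : List (Finset ℕ))
    (_ : IsMLQ n (sortDesc τ) rows ∧ maj n rows = 0 ∧ strtypeOf n rows = τ),
    xM n rows

/-- The nonsymmetric Kostka–Foulkes polynomial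
`K_{α,β}(q) = Σ_Q q^{charge(Q)}`, the sum over the semistandard Young tableaux `Q`
of shape `sort(β)'` and content `sort(α)'` such that `type(ρ^{-1}(M_β, Q)) = α`,
the preimage being expressed via the collapsing bijection `ρ = (ρ_N, ρ_Q)`. -/
noncomputable def Kpoly (n : ℕ) (α β : ℕ → ℕ) : Polynomial ℤ :=
  ∑ᶠ (Q : List (List ℕ))
    (_ : IsSSYT Q (conj (sortComp n β)) (conj (sortComp n α)) ∧
      ∃ rows : List (Finset ℕ), IsMLQ n (sortComp n α) rows ∧
        rhoN n rows = straight n β ∧ rhoQ n rows = Q ∧ typeOf n rows = α),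
    qpow (tabCharge Q)

/-- The quasisymmetric Kostka–Foulkes polynomial
`K_{γ,τ}(q) = Σ_Q q^{charge(Q)}`, the sum over the semistandard Young tableaux `Q`
of shape `sort(τ)'` and content `sort(γ)'` such that `strtype(ρ^{-1}(M_τ, Q)) = γ`. -/
noncomputable def KpolyQ (n : ℕ) (γ τ : List ℕ) : Polynomial ℤ :=
  ∑ᶠ (Q : List (List ℕ))
    (_ : IsSSYT Q (conj (sortDesc τ)) (conj (sortDesc γ)) ∧
      ∃ rows : List (Finset ℕ), IsMLQ n (sortDesc γ) rows ∧
        rhoN n rows = straight n (padComp n τ) ∧ rhoQ n rows = Q ∧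
        strtypeOf n rows = γ),
    qpow (tabCharge Q)


/-! ### Auxiliary development for Statement 17 -/

section Aux

/-- The step function of `scan`. -/
def sstep (a b : Finset ℕ) (st : List ℕ × Finset ℕ × Finset ℕ × List ℕ) (j : ℕ) :
    List ℕ × Finset ℕ × Finset ℕ × List ℕ :=
  let stk : List ℕ := if j ∈ b then j :: st.1 else st.1
  if j ∈ a then
    match stk with
    | [] => ([], st.2.1, st.2.2.1, st.2.2.2 ++ [j])
    | x :: rest => (rest, insert x st.2.1, insert j st.2.2.1, st.2.2.2)
  else (stk, st.2.1, st.2.2.1, st.2.2.2)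

lemma scan_eq (n : ℕ) (a b : Finset ℕ) :
    scan n a b = (colsList n).foldl (sstep a b) ([], ∅, ∅, []) := rfl

/-- One-step facts about `sstep`. -/
lemma sstep_mA_subset (a b : Finset ℕ) (st : List ℕ × Finset ℕ × Finset ℕ × List ℕ) (j : ℕ) :
    st.2.2.1 ⊆ (sstep a b st j).2.2.1 := by
  unfold sstep
  by_cases hja : j ∈ a <;> by_cases hjb : j ∈ b <;>
    simp only [hja, hjb, if_true, if_false] <;>
    first
      | (cases h : (j :: st.1 : List ℕ) with
          | nil => simp at h
          | cons x rest => simp [Finset.subset_insert])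
      | (cases h : st.1 with
          | nil => simp
          | cons x rest => simp [Finset.subset_insert])
      | simp

lemma sstep_mA_mem (a b : Finset ℕ) (st : List ℕ × Finset ℕ × Finset ℕ × List ℕ) (j x : ℕ)
    (hx : x ∈ (sstep a b st j).2.2.1) : x ∈ st.2.2.1 ∨ (x = j ∧ x ∈ a) := by
  unfold sstep at hx
  by_cases hja : j ∈ a <;> by_cases hjb : j ∈ b <;>
    simp only [hja, hjb, if_true, if_false] at hx
  · rcases Finset.mem_insert.1 hx with h | h
    · exact Or.inr ⟨h, h ▸ hja⟩
    · exact Or.inl h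
  · cases h : st.1 with
    | nil => rw [h] at hx; exact Or.inl hx
    | cons y rest =>
        rw [h] at hx
        rcases Finset.mem_insert.1 hx with h' | h'
        · exact Or.inr ⟨h', h' ▸ hja⟩
        · exact Or.inl h'
  · exact Or.inl hx
  · exact Or.inl hx

lemma sstep_uA (a b : Finset ℕ) (st : List ℕ × Finset ℕ × Finset ℕ × List ℕ) (j : ℕ) :
    ∃ t : List ℕ, (sstep a b st j).2.2.2 = st.2.2.2 ++ t ∧ ∀ x ∈ t, x = j ∧ x ∈ a := by
  unfold sstep
  by_cases hja : j ∈ a <;> by_cases hjb : j ∈ b <;>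
    simp only [hja, hjb, if_true, if_false]
  · exact ⟨[], by simp, by simp⟩
  · cases h : st.1 with
    | nil => exact ⟨[j], by simp, by simp [hja]⟩
    | cons y rest => exact ⟨[], by simp, by simp⟩
  · exact ⟨[], by simp, by simp⟩
  · exact ⟨[], by simp, by simp⟩

lemma sstep_stk (a b : Finset ℕ) (st : List ℕ × Finset ℕ × Finset ℕ × List ℕ) (j : ℕ) :
    ∃ (h : List ℕ) (k : ℕ), (sstep a b st j).1 = h ++ st.1.drop k ∧ ∀ x ∈ h, x = j ∧ x ∈ b := by
  unfold sstep
  by_cases hja : j ∈ a <;> by_cases hjb : j ∈ b <;>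
    simp only [hja, hjb, if_true, if_false]
  · exact ⟨[], 0, by simp, by simp⟩
  · cases h : st.1 with
    | nil => exact ⟨[], 1, by simp, by simp⟩
    | cons y rest => exact ⟨[], 1, by simp [h], by simp⟩
  · exact ⟨[j], 0, by simp, by simp [hjb]⟩
  · exact ⟨[], 0, by simp, by simp⟩

/-- Fold invariants for `scan`. -/
lemma scan_foldl_mA_subset (a b : Finset ℕ) (l : List ℕ)
    (st : List ℕ × Finset ℕ × Finset ℕ × List ℕ) :
    st.2.2.1 ⊆ (l.foldl (sstep a b) st).2.2.1 := by
  induction l generalizing st with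
  | nil => simp
  | cons j l ih =>
      rw [List.foldl_cons]
      exact (sstep_mA_subset a b st j).trans (ih _)

lemma scan_foldl_mA_mem (a b : Finset ℕ) (l : List ℕ)
    (st : List ℕ × Finset ℕ × Finset ℕ × List ℕ) (x : ℕ)
    (hx : x ∈ (l.foldl (sstep a b) st).2.2.1) : x ∈ st.2.2.1 ∨ (x ∈ l ∧ x ∈ a) := by
  induction l generalizing st with
  | nil => exact Or.inl hx
  | cons j l ih =>
      rw [List.foldl_cons] at hx
      rcases ih _ hx with h | h
      · rcases sstep_mA_mem a b st j x h with h' | h'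
        · exact Or.inl h'
        · exact Or.inr ⟨by simp [h'.1], h'.2⟩
      · exact Or.inr ⟨by simp [h.1], h.2⟩

lemma scan_foldl_uA (a b : Finset ℕ) (l : List ℕ)
    (st : List ℕ × Finset ℕ × Finset ℕ × List ℕ) :
    ∃ t : List ℕ, (l.foldl (sstep a b) st).2.2.2 = st.2.2.2 ++ t ∧ ∀ x ∈ t, x ∈ l ∧ x ∈ a := by
  induction l generalizing st with
  | nil => exact ⟨[], by simp, by simp⟩
  | cons j l ih =>
      rw [List.foldl_cons]
      obtain ⟨t₀, ht₀, hmem₀⟩ := sstep_uA a b st j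
      obtain ⟨t, ht, hmem⟩ := ih (sstep a b st j)
      refine ⟨t₀ ++ t, by rw [ht, ht₀, List.append_assoc], ?_⟩
      intro x hx
      rcases List.mem_append.1 hx with h | h
      · exact ⟨by simp [(hmem₀ x h).1], (hmem₀ x h).2⟩
      · exact ⟨by simp [(hmem x h).1], (hmem x h).2⟩

lemma scan_foldl_stk (a b : Finset ℕ) (l : List ℕ)
    (st : List ℕ × Finset ℕ × Finset ℕ × List ℕ) :
    ∃ (h : List ℕ) (k : ℕ), (l.foldl (sstep a b) st).1 = h ++ st.1.drop k ∧
      ∀ x ∈ h, x ∈ l ∧ x ∈ b := by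
  induction l generalizing st with
  | nil => exact ⟨[], 0, by simp, by simp⟩
  | cons j l ih =>
      rw [List.foldl_cons]
      obtain ⟨h₀, k₀, hk₀, hmem₀⟩ := sstep_stk a b st j
      obtain ⟨h, k, hk, hmem⟩ := ih (sstep a b st j)
      rw [hk₀] at hk
      rw [List.drop_append, List.drop_drop] at hk
      refine ⟨h ++ h₀.drop k, k - h₀.length + k₀, by rw [hk, List.append_assoc, Nat.add_comm], ?_⟩
      intro x hx
      rcases List.mem_append.1 hx with hxh | hxh
      · exact ⟨by simp [(hmem x hxh).1], (hmem x hxh).2⟩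
      · have := hmem₀ x (List.mem_of_mem_drop hxh)
        exact ⟨by simp [this.1], this.2⟩

end Aux
section Aux2

lemma colsList_succ (m : ℕ) : colsList (m + 1) = colsList m ++ [m + 1] := by
  unfold colsList
  rw [List.range_succ, List.map_append]
  simp

lemma colsList_split (m n : ℕ) (h : m ≤ n) :
    ∃ T : List ℕ, colsList n = colsList m ++ T ∧ ∀ x ∈ T, m + 1 ≤ x := by
  obtain ⟨d, rfl⟩ := Nat.exists_eq_add_of_le h
  refine ⟨(List.range d).map (fun x => m + x + 1), ?_, ?_⟩
  · unfold colsList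
    rw [List.range_add, List.map_append, List.map_map]
    rfl
  · intro x hx
    simp only [List.mem_map] at hx
    obtain ⟨y, _, rfl⟩ := hx
    omega

lemma mem_colsList (m x : ℕ) : x ∈ colsList m ↔ 1 ≤ x ∧ x ≤ m := by
  unfold colsList
  simp only [List.mem_map, List.mem_range]
  constructor
  · rintro ⟨y, hy, rfl⟩; omega
  · rintro ⟨h1, h2⟩; exact ⟨x - 1, by omega, by omega⟩

/-- `theta n a b ⊆ a` and the unmatched list is in `a`, hence `Rcyl n a b ⊆ a`. -/
lemma theta_subset (n : ℕ) (a b : Finset ℕ) : theta n a b ⊆ a := by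
  intro x hx
  have := scan_foldl_mA_mem a b (colsList n) ([], ∅, ∅, []) x hx
  simp only [Finset.notMem_empty, false_or] at this
  exact this.2

lemma scan_uA_mem (n : ℕ) (a b : Finset ℕ) :
    ∀ x ∈ (scan n a b).2.2.2, x ∈ a ∧ x ≤ n := by
  intro x hx
  rw [scan_eq] at hx
  obtain ⟨t, ht, hmem⟩ := scan_foldl_uA a b (colsList n) ([], ∅, ∅, [])
  rw [ht] at hx
  simp only [List.nil_append] at hx
  obtain ⟨h1, h2⟩ := hmem x hx
  exact ⟨h2, ((mem_colsList n x).1 h1).2⟩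

lemma Rcyl_subset (n : ℕ) (a b : Finset ℕ) : Rcyl n a b ⊆ a := by
  intro x hx
  rcases Finset.mem_union.1 hx with h | h
  · exact theta_subset n a b h
  · rw [List.mem_toFinset] at h
    exact (scan_uA_mem n a b x (List.mem_of_mem_take h)).1

/-- If `c ∈ a` and `c ∈ b` (with `1 ≤ c ≤ n`), then `c` is classically matched. -/
lemma mem_theta_of_mem_both (n : ℕ) (a b : Finset ℕ) (c : ℕ) (hca : c ∈ a) (hcb : c ∈ b)
    (hc1 : 1 ≤ c) (hcn : c ≤ n) : c ∈ theta n a b := by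
  obtain ⟨T, hT, _⟩ := colsList_split c n hcn
  have hc' : c = (c - 1) + 1 := by omega
  have hsplit : colsList n = colsList (c - 1) ++ [c] ++ T := by
    rw [hT]
    congr 1
    rw [hc', colsList_succ, ← hc']
  show c ∈ (scan n a b).2.2.1
  rw [scan_eq, hsplit, List.foldl_append, List.foldl_append]
  set S0 := (colsList (c-1)).foldl (sstep a b) ([], ∅, ∅, []) with hS0
  have hstep : c ∈ (sstep a b S0 c).2.2.1 := by
    unfold sstep
    simp only [hcb, if_true, hca]
    exact Finset.mem_insert_self c _
  simp only [List.foldl_cons, List.foldl_nil]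
  exact scan_foldl_mA_subset a b T _ hstep

/-- Key lemma (iii): if `c, c+1 ∈ a`, `c+1 ∉ b` and `c ∉ R(a,b)` then `c+1 ∉ R(a,b)`. -/
lemma not_mem_Rcyl_succ (n : ℕ) (a b : Finset ℕ) (c : ℕ) (hca : c ∈ a) (hc1a : c + 1 ∈ a)
    (hc1b : c + 1 ∉ b) (hc1 : 1 ≤ c) (hcn : c + 1 ≤ n) (hcR : c ∉ Rcyl n a b) :
    c + 1 ∉ Rcyl n a b := by
  obtain ⟨T, hT, hTmem⟩ := colsList_split (c+1) n hcn
  have hc' : c = (c - 1) + 1 := by omega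
  have hsplit : colsList n = colsList (c - 1) ++ [c, c + 1] ++ T := by
    rw [hT, colsList_succ]
    conv_lhs => rw [hc', colsList_succ, ← hc']
    simp
  have hscan : scan n a b =
      T.foldl (sstep a b) (sstep a b (sstep a b
        ((colsList (c-1)).foldl (sstep a b) ([], ∅, ∅, [])) c) (c+1)) := by
    rw [scan_eq, hsplit, List.foldl_append, List.foldl_append]
    simp [List.foldl_cons]
  set S0 := (colsList (c-1)).foldl (sstep a b) ([], ∅, ∅, []) with hS0
  -- Facts about S0: its mA and uA only involve columns < c
  have hS0mA : ∀ x ∈ S0.2.2.1, x ≤ c - 1 := by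
    intro x hx
    have := scan_foldl_mA_mem a b (colsList (c-1)) _ x hx
    simp only [Finset.notMem_empty] at this
    rcases this with h | h
    · exact absurd h (by simp)
    · exact ((mem_colsList _ x).1 h.1).2
  have hS0uA : (∀ x ∈ S0.2.2.2, x ≤ c - 1) ∧ ∃ t, S0.2.2.2 = t := by
    refine ⟨?_, ⟨_, rfl⟩⟩
    intro x hx
    obtain ⟨t, ht, hmem⟩ := scan_foldl_uA a b (colsList (c-1)) ([], ∅, ∅, [])
    rw [show S0.2.2.2 = t from by rw [hS0, ht]; simp] at hx
    exact ((mem_colsList _ x).1 (hmem x hx).1).2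
  -- the step at column c: since c ∉ R(a,b), the stack must be empty there
  have hmAfinal : c ∉ (scan n a b).2.2.1 := fun h => hcR (Finset.mem_union_left _ h)
  have hstk1 : (if c ∈ b then c :: S0.1 else S0.1) = [] := by
    by_contra hne
    apply hmAfinal
    rw [hscan]
    apply scan_foldl_mA_subset
    apply sstep_mA_subset
    unfold sstep
    simp only [hca, if_true]
    rcases h : (if c ∈ b then c :: S0.1 else S0.1) with _ | ⟨x, rest⟩
    · exact absurd h hne
    · exact Finset.mem_insert_self c _
  have hSc : sstep a b S0 c = ([], S0.2.1, S0.2.2.1, S0.2.2.2 ++ [c]) := by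
    unfold sstep
    simp only [hstk1, hca, if_true]
  have hSc1 : sstep a b (sstep a b S0 c) (c+1) =
      ([], S0.2.1, S0.2.2.1, S0.2.2.2 ++ [c] ++ [c+1]) := by
    rw [hSc]
    unfold sstep
    simp only [hc1b, if_false, hc1a, if_true]
  simp only [Rcyl]
  rw [hscan, hSc1]
  set S2 : List ℕ × Finset ℕ × Finset ℕ × List ℕ :=
    ([], S0.2.1, S0.2.2.1, S0.2.2.2 ++ [c] ++ [c+1]) with hS2
  intro hmem
  rcases Finset.mem_union.1 hmem with h | h
  · -- c+1 classically matched: impossible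
    have := scan_foldl_mA_mem a b T S2 (c+1) h
    rcases this with h' | h'
    · have := hS0mA _ h'
      omega
    · have := hTmem _ h'.1
      omega
  · -- c+1 among the wrapped (cylindrically matched) unmatched letters: impossible
    rw [List.mem_toFinset] at h
    obtain ⟨t, ht, htmem⟩ := scan_foldl_uA a b T S2
    obtain ⟨hh, kk, hstk, _⟩ := scan_foldl_stk a b T S2
    have hstkT : (T.foldl (sstep a b) S2).1 = hh := by
      rw [hstk]; simp [hS2]
    have huAT : (T.foldl (sstep a b) S2).2.2.2 = S0.2.2.2 ++ [c] ++ [c+1] ++ t := by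
      rw [ht]
    set f := (T.foldl (sstep a b) S2).1.length with hf
    -- c ∉ wrapped: so f ≤ (S0.2.2.2).length
    have hcw : c ∉ ((scan n a b).2.2.2.take ((scan n a b).1.length)).toFinset := by
      intro hc
      exact hcR (Finset.mem_union_right _ hc)
    rw [hscan, hSc1] at hcw
    rw [List.mem_toFinset] at hcw
    have hflen : f ≤ S0.2.2.2.length := by
      by_contra hgt
      apply hcw
      rw [huAT, ← hf]
      rw [List.append_assoc, List.append_assoc]
      rw [List.take_append]
      apply List.mem_append_right
      have : 1 ≤ f - S0.2.2.2.length := by omega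
      rcases Nat.exists_eq_add_of_le this with ⟨d, hd⟩
      simp only [List.cons_append, List.nil_append]
      rw [show f - S0.2.2.2.length = 1 + d from hd]
      simp [List.take_cons]
    -- now c+1 ∈ take f (...) forces c+1 ∈ S0.uA, contradiction
    rw [huAT] at h
    rw [List.append_assoc, List.append_assoc, List.take_append] at h
    rcases List.mem_append.1 h with h' | h'
    · have := hS0uA.1 _ (List.mem_of_mem_take h')
      omega
    · have : f - S0.2.2.2.length = 0 := by omega
      rw [this] at h'
      simp at h'

end Aux2
section AuxCol

/-- The step function of `colScan`. -/
def cstep (i : ℕ) (rows : List (Finset ℕ)) (st : List ℕ × List ℕ) (r : ℕ) : List ℕ × List ℕ :=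
  let stk : List ℕ := if i + 1 ∈ rows.getD r ∅ then r :: st.1 else st.1
  if i ∈ rows.getD r ∅ then
    match stk with
    | [] => ([], st.2 ++ [r])
    | _ :: rest => (rest, st.2)
  else (stk, st.2)

lemma colScan_eq (n i : ℕ) (rows : List (Finset ℕ)) :
    colScan n i rows = ((List.range rows.length).reverse).foldl (cstep i rows) ([], []) := rfl

lemma cstep_stk (i : ℕ) (rows : List (Finset ℕ)) (st : List ℕ × List ℕ) (r : ℕ) :
    ∃ (h : List ℕ) (k : ℕ), (cstep i rows st r).1 = h ++ st.1.drop k ∧ ∀ x ∈ h, x = r := by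
  unfold cstep
  by_cases h1 : i + 1 ∈ rows.getD r ∅ <;> by_cases h2 : i ∈ rows.getD r ∅ <;>
    simp only [h1, h2, if_true, if_false]
  · exact ⟨[], 0, by simp, by simp⟩
  · exact ⟨[r], 0, by simp, by simp⟩
  · cases h : st.1 with
    | nil => exact ⟨[], 1, by simp, by simp⟩
    | cons y rest => exact ⟨[], 1, by simp [h], by simp⟩
  · exact ⟨[], 0, by simp, by simp⟩

lemma col_foldl_stk (i : ℕ) (rows : List (Finset ℕ)) (l : List ℕ) (st : List ℕ × List ℕ) :
    ∃ (h : List ℕ) (k : ℕ), (l.foldl (cstep i rows) st).1 = h ++ st.1.drop k ∧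
      ∀ x ∈ h, x ∈ l := by
  induction l generalizing st with
  | nil => exact ⟨[], 0, by simp, by simp⟩
  | cons j l ih =>
      rw [List.foldl_cons]
      obtain ⟨h₀, k₀, hk₀, hmem₀⟩ := cstep_stk i rows st j
      obtain ⟨h, k, hk, hmem⟩ := ih (cstep i rows st j)
      rw [hk₀, List.drop_append, List.drop_drop] at hk
      refine ⟨h ++ h₀.drop k, k - h₀.length + k₀,
        by rw [hk, List.append_assoc, Nat.add_comm], ?_⟩
      intro x hx
      rcases List.mem_append.1 hx with hxh | hxh
      · exact List.mem_cons_of_mem _ (hmem x hxh)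
      · rw [hmem₀ x (List.mem_of_mem_drop hxh)]; exact List.mem_cons_self

/-- Main structural lemma about `colScan`: if the leftmost unmatched `i+1` is in
(0-indexed) row `t0`, then `t0 < L`, row `t0` contains `i+1` but not `i`, and whenever
all rows of an interval `[p0, t0)` contain `i`, they all contain `i+1` as well. -/
lemma colScan_occupancy (n i : ℕ) (rows : List (Finset ℕ)) (t0 : ℕ)
    (hlast : (colScan n i rows).1.getLast? = some t0) :
    t0 < rows.length ∧ (i+1) ∈ rows.getD t0 ∅ ∧ i ∉ rows.getD t0 ∅ ∧
    ∀ p0, (∀ q, p0 ≤ q → q < t0 → i ∈ rows.getD q ∅) →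
      ∀ q, p0 ≤ q → q < t0 → (i+1) ∈ rows.getD q ∅ := by
  set L := rows.length with hL
  have ht0mem : t0 ∈ (colScan n i rows).1 :=
    List.mem_of_mem_getLast? (by rw [hlast]; rfl)
  -- t0 < L
  have ht0L : t0 < L := by
    rw [colScan_eq] at ht0mem
    obtain ⟨h, k, hk, hmem⟩ := col_foldl_stk i rows ((List.range L).reverse) ([], [])
    rw [hk] at ht0mem
    simp only [List.drop_nil, List.append_nil] at ht0mem
    have := hmem t0 ht0mem
    rw [List.mem_reverse, List.mem_range] at this
    exact this
  -- split the processing at row t0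
  have hsplitL : List.range L = List.range t0 ++ [t0] ++
      (List.range (L - t0 - 1)).map (fun x => (t0 + 1) + x) := by
    obtain ⟨d, hd⟩ : ∃ d, L = (t0 + 1) + d := ⟨L - t0 - 1, by omega⟩
    have h2 : L - t0 - 1 = d := by omega
    rw [h2, hd, List.range_add, List.range_succ]
  set UP : List ℕ := ((List.range (L - t0 - 1)).map (fun x => (t0 + 1) + x)).reverse with hUP
  have hUPmem : ∀ x ∈ UP, t0 < x := by
    intro x hx
    rw [hUP, List.mem_reverse, List.mem_map] at hx
    obtain ⟨y, _, rfl⟩ := hx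
    omega
  set S1 : List ℕ × List ℕ := UP.foldl (cstep i rows) ([], []) with hS1
  set σ : List ℕ × List ℕ := cstep i rows S1 t0 with hσ
  have hRL : (List.range L).reverse = UP ++ [t0] ++ (List.range t0).reverse := by
    rw [hsplitL]
    simp [List.reverse_append, hUP, List.append_assoc]
  have hfin : (colScan n i rows).1 =
      (((List.range t0).reverse).foldl (cstep i rows) σ).1 := by
    rw [colScan_eq, hRL, List.foldl_append, List.foldl_append]
    rfl
  -- elements of S1's stack are > t0
  have hS1mem : ∀ x ∈ S1.1, t0 < x := by
    intro x hx
    obtain ⟨h, k, hk, hmem⟩ := col_foldl_stk i rows UP ([], [])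
    rw [hS1, hk] at hx
    simp only [List.drop_nil, List.append_nil] at hx
    exact hUPmem x (hmem x hx)
  -- t0 ∈ σ.1
  have ht0σ : t0 ∈ σ.1 := by
    obtain ⟨h, k, hk, hmem⟩ := col_foldl_stk i rows ((List.range t0).reverse) σ
    rw [hfin, hk] at ht0mem
    rcases List.mem_append.1 ht0mem with h' | h'
    · have := hmem t0 h'
      rw [List.mem_reverse, List.mem_range] at this
      omega
    · exact List.mem_of_mem_drop h'
  -- analyze the step at row t0
  have hi1r : (i+1) ∈ rows.getD t0 ∅ := by
    by_contra hcon
    have : σ.1 = S1.1 ∨ ∃ k, σ.1 = S1.1.drop k := by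
      rw [hσ]; unfold cstep
      simp only [hcon, if_false]
      by_cases h2 : i ∈ rows.getD t0 ∅
      · simp only [h2, if_true]
        cases h : S1.1 with
        | nil => exact Or.inr ⟨1, by simp [h]⟩
        | cons y rest => exact Or.inr ⟨1, by simp [h]⟩
      · simp only [h2, if_false]
        exact Or.inl trivial
    rcases this with h | ⟨k, h⟩
    · rw [h] at ht0σ; exact absurd (hS1mem t0 ht0σ) (by omega)
    · rw [h] at ht0σ
      exact absurd (hS1mem t0 (List.mem_of_mem_drop ht0σ)) (by omega)
  have hir : i ∉ rows.getD t0 ∅ := by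
    by_contra hcon
    have : σ.1 = S1.1 := by
      rw [hσ]; unfold cstep
      simp only [hi1r, if_true, hcon]
    rw [this] at ht0σ
    exact absurd (hS1mem t0 ht0σ) (by omega)
  have hσ1 : σ.1 = t0 :: S1.1 := by
    rw [hσ]; unfold cstep
    simp only [hi1r, if_true, hir, if_false]
  -- S1.1 = [] so σ.1 = [t0]
  have hS1nil : S1.1 = [] := by
    by_contra hne
    obtain ⟨h, k, hk, hmem⟩ := col_foldl_stk i rows ((List.range t0).reverse) σ
    rw [hfin, hk] at hlast
    rw [hσ1] at hk hlast
    by_cases hkk : k = 0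
    · rw [hkk, List.drop_zero] at hlast
      rw [List.getLast?_append_of_ne_nil h (by simp : (t0 :: S1.1 : List ℕ) ≠ [])] at hlast
      cases hS : S1.1 with
      | nil => exact hne hS
      | cons y rest =>
          rw [hS, List.getLast?_cons_cons] at hlast
          have : (y :: rest).getLast? = some t0 := hlast
          have hmem' : t0 ∈ (y :: rest : List ℕ) :=
            List.mem_of_mem_getLast? (by rw [this]; rfl)
          rw [← hS] at hmem'
          exact absurd (hS1mem t0 hmem') (by omega)
    · have hk1 : (t0 :: S1.1).drop k = S1.1.drop (k - 1) := by
        have : k = (k-1) + 1 := by omega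
        rw [this]
        simp [List.drop_succ_cons]
      rw [hk1] at hk
      rw [hfin, hk] at ht0mem
      rcases List.mem_append.1 ht0mem with h' | h'
      · have := hmem t0 h'
        rw [List.mem_reverse, List.mem_range] at this
        omega
      · exact absurd (hS1mem t0 (List.mem_of_mem_drop h')) (by omega)
  have hσ1' : σ.1 = [t0] := by rw [hσ1, hS1nil]
  -- intermediate states
  refine ⟨ht0L, hi1r, hir, ?_⟩
  intro p0 hocc
  set V : ℕ → List ℕ × List ℕ :=
    fun m => ((List.range' (t0 - m) m).reverse).foldl (cstep i rows) σ with hV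
  have hV0 : V 0 = σ := by simp [hV]
  have hVfin : ∀ m, m ≤ t0 → (colScan n i rows).1 =
      (((List.range (t0 - m)).reverse).foldl (cstep i rows) (V m)).1 := by
    intro m hm
    have hsp : List.range t0 = List.range (t0 - m) ++ List.range' (t0 - m) m := by
      rw [List.range_eq_range', List.range_eq_range']
      have h3 := List.range'_append (s := 0) (m := t0 - m) (n := m) (step := 1)
      simp only [Nat.one_mul, Nat.zero_add] at h3
      rw [show t0 - m + m = t0 from by omega] at h3
      rw [← h3]
    rw [hfin, hsp, List.reverse_append, List.foldl_append]
  have hVmem : ∀ m, m ≤ t0 → t0 ∈ (V m).1 := by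
    intro m hm
    obtain ⟨h, k, hk, hmem⟩ := col_foldl_stk i rows ((List.range (t0 - m)).reverse) (V m)
    have := ht0mem
    rw [hVfin m hm, hk] at this
    rcases List.mem_append.1 this with h' | h'
    · have := hmem t0 h'
      rw [List.mem_reverse, List.mem_range] at this
      omega
    · exact List.mem_of_mem_drop h'
  have hVsucc : ∀ m, m + 1 ≤ t0 → V (m + 1) = cstep i rows (V m) (t0 - m - 1) := by
    intro m hm
    have h1 : List.range' (t0 - (m+1)) (m+1) = (t0 - m - 1) :: List.range' (t0 - m) m := by
      rw [List.range'_succ,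
        show t0 - (m+1) = t0 - m - 1 from by omega,
        show t0 - m - 1 + 1 = t0 - m from by omega]
    rw [hV]
    simp only
    rw [h1, List.reverse_cons, List.foldl_append]
    rfl
  have hcount : ∀ m, m + 1 ≤ t0 →
      (V (m+1)).1.length + (if i ∈ rows.getD (t0 - m - 1) ∅ then 1 else 0)
        = (V m).1.length + (if i + 1 ∈ rows.getD (t0 - m - 1) ∅ then 1 else 0) := by
    intro m hm
    have hne : (V m).1 ≠ [] := by
      intro h
      have := hVmem m (by omega)
      rw [h] at this
      exact absurd this List.not_mem_nil
    rw [hVsucc m hm]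
    unfold cstep
    by_cases h1 : i + 1 ∈ rows.getD (t0 - m - 1) ∅ <;>
      by_cases h2 : i ∈ rows.getD (t0 - m - 1) ∅ <;>
        simp only [h1, h2, if_true, if_false]
    all_goals try simp
    all_goals
      cases h : (V m).1 with
      | nil => exact absurd h hne
      | cons y rest => first | (rw [h]; simp) | simp [h] | simp
  have hTel : ∀ m, m ≤ t0 →
      (V m).1.length + (∑ j ∈ Finset.range m, if i ∈ rows.getD (t0 - 1 - j) ∅ then 1 else 0)
        = 1 + ∑ j ∈ Finset.range m, (if i + 1 ∈ rows.getD (t0 - 1 - j) ∅ then 1 else 0) := by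
    intro m
    induction m with
    | zero => intro _; rw [hV0, hσ1']; simp
    | succ m ih =>
        intro hm
        rw [Finset.sum_range_succ, Finset.sum_range_succ]
        have hidx : t0 - 1 - m = t0 - m - 1 := by omega
        rw [hidx]
        have h1 := hcount m (by omega)
        have h2 := ih (by omega)
        set x1 := (V (m+1)).1.length
        set x2 := (V m).1.length
        set a1 := (if i ∈ rows.getD (t0 - m - 1) ∅ then 1 else 0)
        set a2 := (if i + 1 ∈ rows.getD (t0 - m - 1) ∅ then 1 else 0)
        set A := ∑ j ∈ Finset.range m, if i ∈ rows.getD (t0 - 1 - j) ∅ then 1 else 0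
        set B := ∑ j ∈ Finset.range m, (if i + 1 ∈ rows.getD (t0 - 1 - j) ∅ then 1 else 0)
        omega
  -- conclude
  intro q hq1 hq2
  by_contra hcon
  set m' := t0 - p0 with hm'
  have hA : (∑ j ∈ Finset.range m', if i ∈ rows.getD (t0 - 1 - j) ∅ then 1 else 0) = m' := by
    rw [Finset.sum_congr rfl (g := fun _ => (1:ℕ)) ?_]
    · simp
    · intro j hj
      rw [Finset.mem_range] at hj
      rw [if_pos (hocc (t0 - 1 - j) (by omega) (by omega))]
  have hB : (∑ j ∈ Finset.range m', (if i + 1 ∈ rows.getD (t0 - 1 - j) ∅ then 1 else 0)) < m' := by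
    have hj' : t0 - 1 - q ∈ Finset.range m' := by
      rw [Finset.mem_range]; omega
    calc (∑ j ∈ Finset.range m', (if i + 1 ∈ rows.getD (t0 - 1 - j) ∅ then 1 else 0))
        < ∑ _j ∈ Finset.range m', 1 := by
          apply Finset.sum_lt_sum
          · intro j _; split <;> omega
          · refine ⟨t0 - 1 - q, hj', ?_⟩
            have : t0 - 1 - (t0 - 1 - q) = q := by omega
            rw [this, if_neg hcon]
            omega
      _ = m' := by simp
  have := hTel m' (by omega)
  rw [hA] at this
  have hlen : (V m').1.length = 0 := by omega
  have := hVmem m' (by omega)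
  rw [List.length_eq_zero_iff.mp hlen] at this
  exact absurd this List.not_mem_nil

end AuxCol
section AuxLabel

lemma Rtup_cons (n : ℕ) (b : Finset ℕ) (X : List (Finset ℕ)) (hX : X ≠ []) :
    Rtup n (b :: X) = Rcyl n b (Rtup n X) := by
  cases X with
  | nil => exact absurd rfl hX
  | cons c rest => rfl

lemma Rtup_subset_head (n : ℕ) (l : List (Finset ℕ)) :
    Rtup n l ⊆ l.headD ∅ := by
  cases l with
  | nil => simp [Rtup]
  | cons b X =>
      cases X with
      | nil => exact subset_rfl
      | cons c rest => exact Rcyl_subset n b _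

lemma botLabel_ge (n : ℕ) (rows : List (Finset ℕ)) (c k : ℕ) (hk : k ≤ rows.length)
    (hmem : c ∈ Rtup n (rows.take k)) : k ≤ botLabel n rows c := by
  have h1 : k ∈ Finset.range (rows.length + 1) := by rw [Finset.mem_range]; omega
  have h2 := Finset.le_sup (f := fun k => if c ∈ Rtup n (rows.take k) then k else 0) h1
  simp only [hmem, if_true] at h2
  exact h2

lemma botLabel_le (n : ℕ) (rows : List (Finset ℕ)) (c v : ℕ)
    (h : ∀ k, k ≤ rows.length → c ∈ Rtup n (rows.take k) → k ≤ v) :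
    botLabel n rows c ≤ v := by
  apply Finset.sup_le
  intro k hk
  rw [Finset.mem_range] at hk
  split
  · exact h k (by omega) ‹_›
  · omega

lemma botLabel_le_len (n : ℕ) (rows : List (Finset ℕ)) (c : ℕ) :
    botLabel n rows c ≤ rows.length :=
  botLabel_le n rows c rows.length (fun k hk _ => hk)

lemma botLabel_mem (n : ℕ) (rows : List (Finset ℕ)) (c : ℕ) (h : 0 < botLabel n rows c) :
    botLabel n rows c ≤ rows.length ∧ c ∈ Rtup n (rows.take (botLabel n rows c)) := by
  refine ⟨botLabel_le_len n rows c, ?_⟩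
  obtain ⟨k, hk, hs⟩ := Finset.exists_mem_eq_sup (Finset.range (rows.length + 1))
    ⟨0, by simp⟩ (fun k => if c ∈ Rtup n (rows.take k) then k else 0)
  rw [Finset.mem_range] at hk
  have hs' : botLabel n rows c = if c ∈ Rtup n (rows.take k) then k else 0 := hs
  by_cases hm : c ∈ Rtup n (rows.take k)
  · rw [if_pos hm] at hs'
    rw [hs']
    exact hm
  · rw [if_neg hm] at hs'
    omega

lemma drop_take_cons (M : List (Finset ℕ)) (s k : ℕ) (hs : s < M.length) :
    (M.drop s).take (k + 1) = M.getD s ∅ :: (M.drop (s + 1)).take k := by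
  rw [List.drop_eq_getElem_cons hs, List.take_succ_cons, List.getD_eq_getElem M ∅ hs]

lemma Tm_decomp (n : ℕ) (M : List (Finset ℕ)) (s m : ℕ) (hs1 : 1 ≤ s) (hsm : s < m)
    (hsL : s < M.length) (hmL : m ≤ M.length) :
    Rtup n ((M.drop (s - 1)).take (m + 1 - s)) =
      Rcyl n (M.getD (s - 1) ∅) (Rtup n ((M.drop s).take (m - s))) := by
  have h1 : s - 1 < M.length := by omega
  have h2 : m + 1 - s = (m - s) + 1 := by omega
  rw [h2, drop_take_cons M (s - 1) (m - s) h1, show s - 1 + 1 = s from by omega]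
  apply Rtup_cons
  intro h
  have := congrArg List.length h
  simp only [List.length_take, List.length_drop, List.length_nil] at this
  omega

end AuxLabel
lemma mem_of_botLabel_pos (n : ℕ) (M : List (Finset ℕ)) (q0 c : ℕ) (hq : q0 < M.length)
    (h : 0 < botLabel n (M.drop q0) c) : c ∈ M.getD q0 ∅ := by
  obtain ⟨hle, hmem⟩ := botLabel_mem n (M.drop q0) c h
  have hsub := Rtup_subset_head n ((M.drop q0).take (botLabel n (M.drop q0) c))
  have hx := hsub hmem
  rw [show botLabel n (M.drop q0) c = (botLabel n (M.drop q0) c - 1) + 1 from by omega,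
    drop_take_cons M q0 _ hq] at hx
  simpa using hx

/-- Let `M` be a multiline queue, `1 ≤ i ≤ n−1` with
`e_i^←(M) ≠ M`; let `(r,i+1)` be the site of the moved ball, `ℓ = L_M(r,i+1)`, and
suppose the `i`-active region spans rows `p` through `r`.  Then
`L_M(s,i+1) = ℓ` for all `p ≤ s ≤ r`. -/
theorem statement17 (n : ℕ) (hn : 1 ≤ n) (lam : List ℕ) (hlam : IsPartitionL lam)
    (hlen : lam.length < n) (M : List (Finset ℕ)) (hM : IsMLQ n lam M)
    (i : ℕ) (hi1 : 1 ≤ i) (hi2 : i < n)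
    (hne : eCol n i M ≠ M) (r : ℕ) (hr : movedRowE n i M = some r) :
    ∀ s : ℕ, actLow n M i r (labelAt n M r (i + 1)) ≤ s → s ≤ r →
      labelAt n M s (i + 1) = labelAt n M r (i + 1) := by
  obtain ⟨t0, hlast, ht0r⟩ : ∃ t0, (colScan n i M).1.getLast? = some t0 ∧ t0 + 1 = r := by
    unfold movedRowE at hr
    cases h : (colScan n i M).1.getLast? with
    | none => rw [h] at hr; simp at hr
    | some t => rw [h] at hr; simp at hr; exact ⟨t, rfl, hr⟩
  obtain ⟨ht0L, hi1t0, _, hoccA⟩ := colScan_occupancy n i M t0 hlast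
  set L := M.length with hL
  have hr1 : r = t0 + 1 := ht0r.symm
  have hrL : r ≤ L := by omega
  set ℓ := labelAt n M r (i + 1) with hℓ
  have hdlen : (M.drop (r - 1)).length = L - (r - 1) := by rw [List.length_drop]
  have hbpos : 0 < botLabel n (M.drop (r - 1)) (i + 1) := by
    have h1 : r - 1 < L := by omega
    have hmem : (i + 1) ∈ Rtup n ((M.drop (r - 1)).take 1) := by
      rw [show (1 : ℕ) = 0 + 1 from rfl, drop_take_cons M (r - 1) 0 h1]
      simp only [List.take_zero]
      show (i + 1) ∈ M.getD (r - 1) ∅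
      rw [show r - 1 = t0 from by omega]
      exact hi1t0
    have := botLabel_ge n (M.drop (r - 1)) (i + 1) 1 (by omega) hmem
    omega
  have hlv : ℓ = botLabel n (M.drop (r - 1)) (i + 1) + (r - 1) := by
    rw [hℓ]; unfold labelAt
    rw [if_pos ⟨by omega, hbpos⟩]
  have hlL : ℓ ≤ L := by
    have := botLabel_le_len n (M.drop (r - 1)) (i + 1)
    omega
  have hrl : r ≤ ℓ := by omega
  -- actLow facts
  set S : Finset ℕ := (Finset.Icc 1 r).filter
    (fun q => labelAt n M (q - 1) i = 0 ∨ ℓ ≤ labelAt n M (q - 1) i) with hS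
  have hpS : actLow n M i r ℓ = S.sup id := rfl
  set p := actLow n M i r ℓ with hpdef
  have h1S : (1 : ℕ) ∈ S := by
    rw [hS, Finset.mem_filter, Finset.mem_Icc]
    refine ⟨⟨le_refl 1, by omega⟩, Or.inl ?_⟩
    unfold labelAt
    rw [if_neg (fun h => absurd h.1 (by omega))]
  have hp1 : 1 ≤ p := by
    rw [hpS]
    exact Finset.le_sup (f := id) h1S
  have hpr : p ≤ r := by
    rw [hpS]
    apply Finset.sup_le
    intro q hq
    rw [hS, Finset.mem_filter, Finset.mem_Icc] at hq
    exact hq.1.2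
  have hmax : ∀ q, p < q → q ≤ r →
      0 < labelAt n M (q - 1) i ∧ labelAt n M (q - 1) i < ℓ := by
    intro q hq1 hq2
    by_contra hcon
    have hqS : q ∈ S := by
      rw [hS, Finset.mem_filter, Finset.mem_Icc]
      refine ⟨⟨by omega, hq2⟩, ?_⟩
      by_cases h0 : labelAt n M (q - 1) i = 0
      · exact Or.inl h0
      · refine Or.inr ?_
        by_contra hlt
        exact hcon ⟨by omega, by omega⟩
    have h2 := Finset.le_sup (f := id) hqS
    rw [← hpS] at h2
    simp only [id] at h2
    omega
  -- occupancy of column i in rows p..r-1 (0-based)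
  have hocc_i : ∀ q0, p - 1 ≤ q0 → q0 < t0 → i ∈ M.getD q0 ∅ := by
    intro q0 h1 h2
    obtain ⟨hpos, _⟩ := hmax (q0 + 2) (by omega) (by omega)
    rw [show q0 + 2 - 1 = q0 + 1 from by omega] at hpos
    unfold labelAt at hpos
    simp only [Nat.add_sub_cancel] at hpos
    split at hpos
    · rename_i hc
      exact mem_of_botLabel_pos n M q0 i (by omega) hc.2
    · omega
  have hocc_i1 : ∀ q0, p - 1 ≤ q0 → q0 < t0 → (i + 1) ∈ M.getD q0 ∅ :=
    hoccA (p - 1) hocc_i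
  -- the key double chain, downward from row r
  have key : ∀ d, p ≤ r - d →
      ((i + 1) ∈ Rtup n ((M.drop (r - d - 1)).take (ℓ + 1 - (r - d)))) ∧
      (∀ m, ℓ + 1 ≤ m → m ≤ L →
        (i + 1) ∉ Rtup n ((M.drop (r - d - 1)).take (m + 1 - (r - d)))) := by
    intro d
    induction d with
    | zero =>
        intro _
        simp only [Nat.sub_zero]
        constructor
        · rw [show ℓ + 1 - r = botLabel n (M.drop (r - 1)) (i + 1) from by omega]
          exact (botLabel_mem n (M.drop (r - 1)) (i + 1) hbpos).2
        · intro m hm1 hm2 hmem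
          have := botLabel_ge n (M.drop (r - 1)) (i + 1) (m + 1 - r)
            (by rw [hdlen]; omega) hmem
          omega
    | succ d ih =>
        intro hd
        set s := r - (d + 1) with hs
        have hs1 : 1 ≤ s := by omega
        have hsr : s + 1 = r - d := by omega
        have hsltr : s < r := by omega
        obtain ⟨ih1, ih2⟩ := ih (by omega)
        rw [← hsr] at ih1 ih2
        have hoccs : (i + 1) ∈ M.getD (s - 1) ∅ := hocc_i1 (s - 1) (by omega) (by omega)
        have hlabs := hmax (s + 1) (by omega) (by omega)
        rw [Nat.add_sub_cancel] at hlabs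
        have hbots : 0 < botLabel n (M.drop (s - 1)) i := by
          rcases hlabs with ⟨h0, _⟩
          unfold labelAt at h0
          split at h0
          · rename_i hc; exact hc.2
          · omega
        have hoccsi : i ∈ M.getD (s - 1) ∅ :=
          mem_of_botLabel_pos n M (s - 1) i (by omega) hbots
        have e1 : s + 1 - 1 = s := by omega
        constructor
        · rw [Tm_decomp n M s ℓ hs1 (by omega) (by omega) (by omega)]
          rw [e1, show ℓ + 1 - (s + 1) = ℓ - s from by omega] at ih1
          apply Finset.mem_union_left
          exact mem_theta_of_mem_both n (M.getD (s - 1) ∅) _ (i + 1) hoccs ih1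
            (by omega) (by omega)
        · intro m hm1 hm2
          rw [Tm_decomp n M s m hs1 (by omega) (by omega) (by omega)]
          have ihm := ih2 m hm1 hm2
          rw [e1, show m + 1 - (s + 1) = m - s from by omega] at ihm
          have hiR : i ∉ Rcyl n (M.getD (s - 1) ∅) (Rtup n ((M.drop s).take (m - s))) := by
            intro hiR
            rw [← Tm_decomp n M s m hs1 (by omega) (by omega) (by omega)] at hiR
            have hb := botLabel_ge n (M.drop (s - 1)) i (m + 1 - s)
              (by rw [List.length_drop]; omega) hiR
            have hlab : labelAt n M s i = botLabel n (M.drop (s - 1)) i + (s - 1) := by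
              unfold labelAt
              rw [if_pos ⟨hs1, hbots⟩]
            rcases hlabs with ⟨_, h2⟩
            omega
          exact not_mem_Rcyl_succ n _ _ i hoccsi hoccs ihm hi1 (by omega) hiR
  -- conclusion
  intro s hps hsr2
  have hs1 : 1 ≤ s := by omega
  obtain ⟨k1, k2⟩ := key (r - s) (by omega)
  rw [show r - (r - s) = s from by omega] at k1 k2
  have hble : botLabel n (M.drop (s - 1)) (i + 1) ≤ ℓ + 1 - s := by
    apply botLabel_le
    intro k hk hmem
    by_contra hgt
    refine k2 (k + s - 1) (by omega) (by rw [List.length_drop] at hk; omega) ?_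
    rw [show k + s - 1 + 1 - s = k from by omega]
    exact hmem
  have hbge : ℓ + 1 - s ≤ botLabel n (M.drop (s - 1)) (i + 1) :=
    botLabel_ge n _ _ _ (by rw [List.length_drop]; omega) k1
  have hfin : labelAt n M s (i + 1) = botLabel n (M.drop (s - 1)) (i + 1) + (s - 1) := by
    unfold labelAt
    rw [if_pos ⟨hs1, by omega⟩]
  omega

end MultilineQueue
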